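/- arXiv:2006.08712 — 3 statements merged into one kernel-verified Lean document; each statement's English description precedes it below -/
import Mathlib

section
/- Let h ≥ 1, let X ⊆ B^h be nonempty, let G = Q_h(X), and let v ∈ ∩_{x∈\widehat X} I_G(0^h, x). Then the map u ↦ u ⊕ v maps the vertex set V(G) bijectively onto V(G). -/
open SimpleGraph

/-- The hypercube `Q_h` on binary words of length `h`: two words are adjacent
iff their Hamming distance is `1`. -/
def Qcube (h : ℕ) : SimpleGraph (Fin h → Bool) where
  Adj u v := hammingDist u v = 1
  symm := ⟨fun u v huv => by simpa [hammingDist_comm] using huv⟩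
  loopless := ⟨fun u hu => by simp [hammingDist_self] at hu⟩

/-- Vertex set of the daisy cube `Q_h(X)`: all words below some element of `X`. -/
def daisyVerts {h : ℕ} (X : Set (Fin h → Bool)) : Set (Fin h → Bool) :=
  {v | ∃ x ∈ X, v ≤ x}

/-- The daisy cube `Q_h(X)`, the subgraph of `Q_h` induced by `daisyVerts X`. -/
def daisyGraph {h : ℕ} (X : Set (Fin h → Bool)) : SimpleGraph (daisyVerts X) :=
  SimpleGraph.induce (daisyVerts X) (Qcube h)

/-- `\widehat X`: the set of maximal elements of the poset `(X, ≤)`. -/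
def maxSet {h : ℕ} (X : Set (Fin h → Bool)) : Set (Fin h → Bool) :=
  {x ∈ X | ∀ y ∈ X, x ≤ y → x = y}

/-- The all-zeros word `0^h`. -/
def zeroW (h : ℕ) : Fin h → Bool := fun _ => false

/-- Bitwise XOR of words. -/
def xorW {h : ℕ} (u v : Fin h → Bool) : Fin h → Bool := fun i => xor (u i) (v i)

/-- Bitwise AND of words. -/
def andW {h : ℕ} (u v : Fin h → Bool) : Fin h → Bool := fun i => u i && v i

/-- The weight `w(u)`: the number of ones of a word. -/
def weightW {h : ℕ} (u : Fin h → Bool) : ℕ :=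
  (Finset.univ.filter fun i => u i = true).card

/-- The interval `I_G(u,v)`: vertices lying on shortest `u,v`-paths. -/
def gInterval {V : Type*} (G : SimpleGraph V) (u v : V) : Set V :=
  {w | G.dist u w + G.dist w v = G.dist u v}

/-- `N^u(v)`: neighbors of `v` that are closer to `u` than `v` is. -/
def lowerNbrs {V : Type*} (G : SimpleGraph V) (u v : V) : Set V :=
  {z | G.Adj v z ∧ G.dist u z + 1 = G.dist u v}

/-- `α` is an isometric embedding of `G` into `Q_h`. -/
def IsIsomEmb {V : Type*} (G : SimpleGraph V) {h : ℕ} (α : V → Fin h → Bool) : Prop :=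
  ∀ a b, hammingDist (α a) (α b) = G.dist a b

/-- `α` is a proper embedding of `G` into `Q_h`: an isometric embedding such that
`G` is isomorphic to the daisy cube generated by the image of `α`. -/
def IsProperEmb {V : Type*} (G : SimpleGraph V) {h : ℕ} (α : V → Fin h → Bool) : Prop :=
  IsIsomEmb G α ∧ Nonempty (G ≃g daisyGraph (Set.range α))

/-- `v` is a minimal vertex of `G`: some proper embedding sends `v` to `0^h`. -/
def IsMinVertex {V : Type*} (G : SimpleGraph V) (h : ℕ) (v : V) : Prop :=
  ∃ α : V → Fin h → Bool, IsProperEmb G α ∧ α v = zeroW h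

/-- The labeling conditions of Proposition `cubes`/Lemma `partial`: `α v = 0^h`,
the neighbors of `v` get pairwise distinct weight-one labels, and every other
vertex gets the bitwise OR of the labels of its down-neighbors. -/
def goodLabeling {V : Type*} (G : SimpleGraph V) {h : ℕ} (v : V)
    (α : V → Fin h → Bool) : Prop :=
  α v = zeroW h ∧
  Set.InjOn α (G.neighborSet v) ∧
  (∀ z ∈ G.neighborSet v, weightW (α z) = 1) ∧
  (∀ u ∉ insert v (G.neighborSet v),
    ∀ i, α u i = true ↔ ∃ z ∈ lowerNbrs G v u, α z i = true)


lemma ham_zero {h : ℕ} (u : Fin h → Bool) : hammingDist (zeroW h) u = weightW u := by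
  unfold hammingDist weightW zeroW
  congr 1
  ext i
  cases u i <;> simp

lemma ham_le_len {h : ℕ} {X : Set (Fin h → Bool)} :
    ∀ {a b : daisyVerts X} (p : (daisyGraph X).Walk a b),
      hammingDist (a : Fin h → Bool) (b : Fin h → Bool) ≤ p.length := by
  intro a b p
  induction p with
  | nil => simp
  | @cons a c b hadj p ih =>
      have h1 : hammingDist (a : Fin h → Bool) (c : Fin h → Bool) = 1 := hadj
      calc hammingDist (a : Fin h → Bool) (b : Fin h → Bool)
          ≤ hammingDist (a : Fin h → Bool) (c : Fin h → Bool)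
            + hammingDist (c : Fin h → Bool) (b : Fin h → Bool) := hammingDist_triangle _ _ _
        _ ≤ 1 + p.length := by omega
        _ = (SimpleGraph.Walk.cons hadj p).length := by simp [SimpleGraph.Walk.length_cons]; omega

lemma walk_from_zero {h : ℕ} {X : Set (Fin h → Bool)}
    (z : daisyVerts X) (hz : (z : Fin h → Bool) = zeroW h) :
    ∀ (n : ℕ) (u : daisyVerts X), weightW (u : Fin h → Bool) = n →
      ∃ p : (daisyGraph X).Walk z u, p.length = n := by
  intro n
  induction n with
  | zero =>
      intro u hu
      have hu0 : (u : Fin h → Bool) = zeroW h := by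
        funext i
        have : (Finset.univ.filter fun j => (u : Fin h → Bool) j = true) = ∅ :=
          Finset.card_eq_zero.mp hu
        have := Finset.eq_empty_iff_forall_notMem.mp this i
        simp at this
        simp [this, zeroW]
      have : z = u := Subtype.ext (hz.trans hu0.symm)
      subst this
      exact ⟨SimpleGraph.Walk.nil, rfl⟩
  | succ n ih =>
      intro u hu
      have hne : (Finset.univ.filter fun j => (u : Fin h → Bool) j = true).Nonempty := by
        rw [← Finset.card_pos]
        have := hu
        unfold weightW at this
        omega
      obtain ⟨i, hi⟩ := hne
      have hui : (u : Fin h → Bool) i = true := by simpa using hi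
      set u' : Fin h → Bool := Function.update (u : Fin h → Bool) i false with hu'def
      have hle : u' ≤ (u : Fin h → Bool) := by
        intro j
        by_cases hji : j = i
        · subst hji; simp [hu'def]
        · simp [hu'def, Function.update_of_ne hji]
      have hu'mem : u' ∈ daisyVerts X := by
        obtain ⟨x, hxX, hux⟩ := u.2
        exact ⟨x, hxX, hle.trans hux⟩
      have hfilt : (Finset.univ.filter fun j => u' j = true)
          = (Finset.univ.filter fun j => (u : Fin h → Bool) j = true).erase i := by
        ext j
        by_cases hji : j = i
        · subst hji; simp [hu'def]
        · simp [hu'def, Function.update_of_ne hji, hji]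
      have hw' : weightW u' = n := by
        unfold weightW at hu ⊢
        rw [hfilt, Finset.card_erase_of_mem hi, hu]; omega
      obtain ⟨p, hp⟩ := ih ⟨u', hu'mem⟩ hw'
      have hadj : (daisyGraph X).Adj ⟨u', hu'mem⟩ u := by
        show hammingDist u' (u : Fin h → Bool) = 1
        have : (Finset.univ.filter fun j => u' j ≠ (u : Fin h → Bool) j) = {i} := by
          ext j
          by_cases hji : j = i
          · subst hji; simp [hu'def, hui]
          · simp [hu'def, Function.update_of_ne hji, hji]
        unfold hammingDist
        rw [show ({j | u' j ≠ (u : Fin h → Bool) j} : Finset (Fin h))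
            = Finset.univ.filter fun j => u' j ≠ (u : Fin h → Bool) j from rfl, this]
        simp
      exact ⟨p.concat hadj, by rw [SimpleGraph.Walk.length_concat, hp]⟩

lemma le_of_weight_ineq {h : ℕ} (v x : Fin h → Bool)
    (H : weightW v + hammingDist v x ≤ weightW x) : v ≤ x := by
  by_contra hc
  have : ∃ i, v i = true ∧ x i = false := by
    rw [Pi.le_def] at hc
    push_neg at hc
    obtain ⟨i, hi⟩ := hc
    refine ⟨i, ?_, ?_⟩ <;> revert hi <;> cases v i <;> cases x i <;> simp
  obtain ⟨i, hvi, hxi⟩ := this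
  set A := Finset.univ.filter fun j => v j = true with hA
  set D := Finset.univ.filter fun j => v j ≠ x j with hD
  set B := Finset.univ.filter fun j => x j = true with hB
  have hham : hammingDist v x = D.card := rfl
  have hBsub : B ⊆ A ∪ D := by
    intro j hj
    simp only [hA, hD, hB, Finset.mem_union, Finset.mem_filter, Finset.mem_univ, true_and] at *
    by_cases hvj : v j = true
    · exact Or.inl hvj
    · right; simp only [Bool.not_eq_true] at hvj; rw [hvj, hj]; simp
  have hiAD : i ∈ A ∩ D := by
    simp [hA, hD, hvi, hxi]
  have hiB : i ∉ B := by simp [hB, hxi]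
  have hss : B ⊂ A ∪ D :=
    ⟨hBsub, fun hsub => hiB (hsub (Finset.mem_union_left D (Finset.mem_inter.mp hiAD).1))⟩
  have h1 : B.card < (A ∪ D).card := Finset.card_lt_card hss
  have h2 : (A ∪ D).card + (A ∩ D).card = A.card + D.card := Finset.card_union_add_card_inter A D
  have h3 : 1 ≤ (A ∩ D).card := Finset.card_pos.mpr ⟨i, hiAD⟩
  have hWv : weightW v = A.card := rfl
  have hWx : weightW x = B.card := rfl
  omega


/-- If `v` lies in all intervals `I_G(0^h, x)` for maximal `x`, then
`u ↦ u ⊕ v` maps the vertex set of the daisy cube bijectively onto itself. -/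
theorem stmt_1 (h : ℕ) (hh : 1 ≤ h) (X : Set (Fin h → Bool)) (hX : X.Nonempty)
    (z : daisyVerts X) (hz : (z : Fin h → Bool) = zeroW h)
    (v : daisyVerts X)
    (hv : ∀ x : daisyVerts X, (x : Fin h → Bool) ∈ maxSet X →
      v ∈ gInterval (daisyGraph X) z x) :
    Set.BijOn (fun u => xorW u (v : Fin h → Bool)) (daisyVerts X) (daisyVerts X) := by
  have hinv : ∀ u : Fin h → Bool, xorW (xorW u (v : Fin h → Bool)) (v : Fin h → Bool) = u := by
    intro u
    funext i
    simp only [xorW]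
    cases u i <;> cases (v : Fin h → Bool) i <;> rfl
  have key : ∀ u ∈ daisyVerts X, xorW u (v : Fin h → Bool) ∈ daisyVerts X := by
    rintro u ⟨x, hxX, hux⟩
    -- get a maximal element x' above x
    obtain ⟨x', ⟨hx'X, hxx'⟩, hmax'⟩ : ∃ x' ∈ {y ∈ X | x ≤ y},
        ∀ a' ∈ {y ∈ X | x ≤ y}, id x' ≤ id a' → id x' = id a' := by
      obtain ⟨b, -, hb⟩ := Set.Finite.exists_le_maximal (Set.toFinite {y ∈ X | x ≤ y}) (a := x) ⟨hxX, le_refl x⟩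
      exact ⟨b, hb.prop, fun a' ha' hle => le_antisymm hle (hb.2 ha' hle)⟩
    simp only [id] at hmax'
    have hmax : ∀ y ∈ X, x' ≤ y → x' = y := fun y hy hxy =>
      hmax' y ⟨hy, hxx'.trans hxy⟩ hxy
    have hx'd : x' ∈ daisyVerts X := ⟨x', hx'X, le_rfl⟩
    set xs : daisyVerts X := ⟨x', hx'd⟩ with hxs
    have hint := hv xs ⟨hx'X, hmax⟩
    -- walks from zero
    obtain ⟨pv, hpv⟩ := walk_from_zero z hz (weightW (v : Fin h → Bool)) v rfl
    obtain ⟨px, hpx⟩ := walk_from_zero z hz (weightW x') xs rfl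
    have rzv : (daisyGraph X).Reachable z v := ⟨pv⟩
    have rzx : (daisyGraph X).Reachable z xs := ⟨px⟩
    have rvx : (daisyGraph X).Reachable v xs := rzv.symm.trans rzx
    have h1 : hammingDist (z : Fin h → Bool) (v : Fin h → Bool)
        ≤ (daisyGraph X).dist z v := by
      obtain ⟨q, hq⟩ := rzv.exists_walk_length_eq_dist
      calc hammingDist (z : Fin h → Bool) (v : Fin h → Bool) ≤ q.length := ham_le_len q
        _ = _ := hq
    have h2 : hammingDist (v : Fin h → Bool) x' ≤ (daisyGraph X).dist v xs := by
      obtain ⟨q, hq⟩ := rvx.exists_walk_length_eq_dist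
      calc hammingDist (v : Fin h → Bool) x' ≤ q.length := ham_le_len q
        _ = _ := hq
    have h3 : (daisyGraph X).dist z xs ≤ weightW x' := by
      calc (daisyGraph X).dist z xs ≤ px.length := SimpleGraph.dist_le px
        _ = weightW x' := hpx
    have hzv : hammingDist (z : Fin h → Bool) (v : Fin h → Bool)
        = weightW (v : Fin h → Bool) := by rw [hz, ham_zero]
    have hineq : weightW (v : Fin h → Bool) + hammingDist (v : Fin h → Bool) x'
        ≤ weightW x' := by
      have := hint
      simp only [gInterval, Set.mem_setOf_eq] at this
      omega
    have hvle : (v : Fin h → Bool) ≤ x' := le_of_weight_ineq _ _ hineq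
    refine ⟨x', hx'X, fun j => ?_⟩
    have hux' : u ≤ x' := hux.trans hxx'
    by_cases hj : x' j = true
    · rw [hj]; exact Bool.le_true _
    · simp only [Bool.not_eq_true] at hj
      have h4 : u j = false := by
        have := hux' j; rw [hj] at this; revert this; cases u j <;> simp
      have h5 : (v : Fin h → Bool) j = false := by
        have := hvle j; rw [hj] at this; revert this; cases (v : Fin h → Bool) j <;> simp
      simp [xorW, h4, h5, hj]
  refine ⟨key, ?_, ?_⟩
  · intro a ha b hb hab
    have : xorW (xorW a (v : Fin h → Bool)) (v : Fin h → Bool)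
        = xorW (xorW b (v : Fin h → Bool)) (v : Fin h → Bool) := by
      simp only at hab; rw [hab]
    rwa [hinv, hinv] at this
  · intro w hw
    exact ⟨xorW w (v : Fin h → Bool), key w hw, hinv w⟩
end

section
/- Let G be a partial cube of isometric dimension h (G admits an isometric embedding into Q_h but into no Q_k with k < h), let u ∈ V(G) have degree h, and assume |N^u(v)| ≥ 2 for every v ∈ V(G) \ N[u]. Let α : V(G) → B^h be a map satisfying: α(u) = 0^h; α restricted to N(u) is injective and α(z) has weight 1 for every z ∈ N(u); and α(v) = ∨_{z∈N^u(v)} α(z) for every v ∈ V(G) \ N[u]. Then (i) α is an isometric embedding of G into Q_h, and (ii) if α' is another map satisfying these conditions with α'(z) = α(z) for every z ∈ N[u], then α' = α. -/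
open SimpleGraph

lemma my_bool_eq_of_iff {a b : Bool} (h : a = true ↔ b = true) : a = b := by
  cases a <;> cases b <;> simp_all

lemma my_hd_zero {h : ℕ} (x : Fin h → Bool) : hammingDist (zeroW h) x = weightW x := by
  simp only [hammingDist, weightW, zeroW]
  congr 1
  ext i
  cases x i <;> simp

lemma my_hd_xor {h : ℕ} (c a b : Fin h → Bool) :
    hammingDist (xorW c a) (xorW c b) = hammingDist a b := by
  simp only [hammingDist, xorW]
  congr 1
  ext i
  cases c i <;> cases a i <;> cases b i <;> simp

lemma my_hd_comp {h : ℕ} (σ : Fin h ≃ Fin h) (x y : Fin h → Bool) :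
    hammingDist (fun i => x (σ i)) (fun i => y (σ i)) = hammingDist x y := by
  simp only [hammingDist]
  apply Finset.card_bij (fun i _ => σ i)
  · intro a ha
    simp only [Finset.mem_filter, Finset.mem_univ, true_and] at ha ⊢
    exact ha
  · intro a _ b _ hab
    exact σ.injective hab
  · intro b hb
    simp only [Finset.mem_filter, Finset.mem_univ, true_and] at hb ⊢
    exact ⟨σ.symm b, by simp [hb], by simp⟩

lemma my_weight_one {h : ℕ} {x : Fin h → Bool} (hx : weightW x = 1) :
    ∃ j, x j = true ∧ ∀ k, k ≠ j → x k = false := by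
  simp only [weightW] at hx
  obtain ⟨j, hj⟩ := Finset.card_eq_one.mp hx
  refine ⟨j, ?_, ?_⟩
  · have : j ∈ Finset.univ.filter fun i => x i = true := hj ▸ Finset.mem_singleton_self j
    simpa using this
  · intro k hk
    by_contra hkx
    have : k ∈ Finset.univ.filter fun i => x i = true := by
      simp [Bool.not_eq_false] at hkx; simp [hkx]
    rw [hj] at this
    exact hk (Finset.mem_singleton.mp this)

lemma my_hd_one {h : ℕ} {x y : Fin h → Bool} (hxy : hammingDist x y = 1) :
    ∃ j, x j ≠ y j ∧ ∀ k, k ≠ j → x k = y k := by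
  simp only [hammingDist] at hxy
  obtain ⟨j, hj⟩ := Finset.card_eq_one.mp hxy
  refine ⟨j, ?_, ?_⟩
  · have : j ∈ Finset.univ.filter fun i => x i ≠ y i := hj ▸ Finset.mem_singleton_self j
    simpa using this
  · intro k hk
    by_contra hkx
    have : k ∈ Finset.univ.filter fun i => x i ≠ y i := by simp [hkx]
    rw [hj] at this
    exact hk (Finset.mem_singleton.mp this)

/-- If `z` and `v` differ in exactly one place and `weight z < weight v`, then the
differing coordinate `j` has `v j = true`, `z j = false`. -/
lemma my_step {h : ℕ} {z v : Fin h → Bool} (h1 : hammingDist z v = 1)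
    (h2 : weightW z < weightW v) :
    ∃ j, v j = true ∧ z j = false ∧ ∀ k, k ≠ j → z k = v k := by
  obtain ⟨j, hj1, hj2⟩ := my_hd_one h1
  refine ⟨j, ?_, ?_, hj2⟩ <;>
  · rcases hzj : z j with _ | _ <;> rcases hvj : v j with _ | _
    all_goals first
      | rfl
      | (exfalso; rw [hzj, hvj] at hj1; exact hj1 rfl)
      | (exfalso
         -- z j = true, v j = false : weight v < weight z, contradiction
         have hsub : (Finset.univ.filter fun i => v i = true) ⊂
             (Finset.univ.filter fun i => z i = true) := by
           constructor
           · intro k hk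
             simp only [Finset.mem_filter, Finset.mem_univ, true_and] at hk ⊢
             have hkj : k ≠ j := fun e => by rw [e, hvj] at hk; exact Bool.noConfusion hk
             rw [hj2 k hkj]; exact hk
           · intro hle
             have : j ∈ Finset.univ.filter fun i => z i = true := by simp [hzj]
             have := hle this
             simp only [Finset.mem_filter, Finset.mem_univ, true_and] at this
             rw [hvj] at this; exact Bool.noConfusion this
         exact absurd (Finset.card_lt_card hsub) (Nat.lt_asymm h2))

lemma my_unique {V : Type*} {h : ℕ} (G : SimpleGraph V) (u : V)
    (α α' : V → Fin h → Bool) (hα : goodLabeling G u α) (hα' : goodLabeling G u α')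
    (hagree : ∀ z ∈ insert u (G.neighborSet u), α' z = α z) : α' = α := by
  obtain ⟨-, -, -, h4⟩ := hα
  obtain ⟨-, -, -, h4'⟩ := hα'
  have H : ∀ n, ∀ v, G.dist u v = n → α' v = α v := by
    intro n
    induction n using Nat.strong_induction_on with
    | _ n ih =>
      intro v hn
      by_cases hv : v ∈ insert u (G.neighborSet u)
      · exact hagree v hv
      · funext i
        apply my_bool_eq_of_iff
        rw [h4' v hv i, h4 v hv i]
        constructor
        · rintro ⟨z, hz, hzi⟩
          refine ⟨z, hz, ?_⟩
          have hd : G.dist u z < n := by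
            have := hz.2; omega
          rw [← ih (G.dist u z) hd z rfl]
          exact hzi
        · rintro ⟨z, hz, hzi⟩
          refine ⟨z, hz, ?_⟩
          have hd : G.dist u z < n := by
            have := hz.2; omega
          rw [ih (G.dist u z) hd z rfl]
          exact hzi
  funext v
  exact H (G.dist u v) v rfl

lemma my_beta {V : Type*} {h : ℕ} (G : SimpleGraph V) (hconn : G.Connected) (u : V)
    (hN : ∀ v, v ∉ insert u (G.neighborSet u) → 2 ≤ (lowerNbrs G u v).ncard)
    (β : V → Fin h → Bool) (hβ : IsIsomEmb G β) :
    goodLabeling G u (fun v => xorW (β u) (β v)) := by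
  set β' : V → Fin h → Bool := fun v => xorW (β u) (β v) with hβ'def
  have hβ'iso : IsIsomEmb G β' := fun a b => by
    rw [hβ'def]; simpa [my_hd_xor] using hβ a b
  have hβ'inj : Function.Injective β' := by
    intro a b hab
    have := hβ'iso a b
    rw [hab, hammingDist_self] at this
    exact hconn.dist_eq_zero_iff.mp this.symm
  have hβ'u : β' u = zeroW h := by
    funext i; simp [hβ'def, xorW, zeroW]
  have hweight : ∀ v, weightW (β' v) = G.dist u v := by
    intro v
    rw [← my_hd_zero, ← hβ'u]
    exact hβ'iso u v
  -- the key decomposition for down-neighbors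
  have hkey : ∀ v, ∀ z ∈ lowerNbrs G u v,
      ∃ j, β' v j = true ∧ β' z j = false ∧ ∀ k, k ≠ j → β' z k = β' v k := by
    intro v z hz
    obtain ⟨hadj, hd⟩ := hz
    apply my_step
    · rw [hβ'iso z v, dist_comm]
      exact (dist_eq_one_iff_adj).mpr hadj
    · rw [hweight, hweight]; omega
  refine ⟨hβ'u, fun a _ b _ hab => hβ'inj hab, ?_, ?_⟩
  · intro z hz
    rw [hweight]
    exact (dist_eq_one_iff_adj).mpr hz
  · intro v hv i
    have hfin : (lowerNbrs G u v).Finite := by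
      by_contra hinf
      have hnc : (lowerNbrs G u v).ncard = 0 := Set.Infinite.ncard hinf
      have := hN v hv
      rw [hnc] at this
      omega
    obtain ⟨z₁, hz₁, z₂, hz₂, hne⟩ :=
      (Set.one_lt_ncard hfin).mp (by have := hN v hv; omega)
    obtain ⟨j₁, hj₁v, hj₁z, hj₁e⟩ := hkey v z₁ hz₁
    obtain ⟨j₂, hj₂v, hj₂z, hj₂e⟩ := hkey v z₂ hz₂
    have hjne : j₁ ≠ j₂ := by
      intro hj
      apply hne
      apply hβ'inj
      funext k
      by_cases hk : k = j₁
      · rw [← hj] at hj₂z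
        rw [hk, hj₁z, hj₂z]
      · rw [hj₁e k hk, hj₂e k (hj ▸ hk)]
    constructor
    · intro hvi
      by_cases hi : i = j₁
      · exact ⟨z₂, hz₂, by rw [hj₂e i (hi ▸ hjne), hvi]⟩
      · exact ⟨z₁, hz₁, by rw [hj₁e i hi, hvi]⟩
    · rintro ⟨z, hz, hzi⟩
      obtain ⟨j, hjv, hjz, hje⟩ := hkey v z hz
      by_cases hij : i = j
      · rw [hij, hjz] at hzi; exact Bool.noConfusion hzi
      · rw [← hje i hij]; exact hzi

/-- Let `G` be a partial cube of isometric dimension `h`, `u` a vertex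
of degree `h`, and suppose `|N^u(v)| ≥ 2` for every `v ∈ V(G) \ N[u]`. If `α`
satisfies `α(u) = 0^h`, neighbors of `u` get pairwise distinct weight-one labels,
and `α(v) = ∨_{z ∈ N^u(v)} α(z)` otherwise, then (i) `α` is an isometric embedding
of `G` into `Q_h`, and (ii) `α` is unique once fixed on `N[u]`. -/
theorem stmt_6 {V : Type*} (h : ℕ) (G : SimpleGraph V) (hconn : G.Connected)
    (hdim1 : ∃ β : V → Fin h → Bool, IsIsomEmb G β)
    (hdim2 : ∀ k, k < h → ¬ ∃ β : V → Fin k → Bool, IsIsomEmb G β)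
    (u : V) (hu : (G.neighborSet u).ncard = h)
    (hN : ∀ v, v ∉ insert u (G.neighborSet u) → 2 ≤ (lowerNbrs G u v).ncard)
    (α : V → Fin h → Bool) (hα : goodLabeling G u α) :
    IsIsomEmb G α ∧
    ∀ α' : V → Fin h → Bool, goodLabeling G u α' →
      (∀ z ∈ insert u (G.neighborSet u), α' z = α z) → α' = α := by
  obtain ⟨β, hβ⟩ := hdim1
  set β' : V → Fin h → Bool := fun v => xorW (β u) (β v) with hβ'def
  have hβ'good : goodLabeling G u β' := my_beta G hconn u hN β hβ
  have hβ'iso : IsIsomEmb G β' := fun a b => by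
    rw [hβ'def]; simpa [my_hd_xor] using hβ a b
  -- the neighbor set is finite
  have hfinN : (G.neighborSet u).Finite := by
    by_contra hinf
    rw [← Set.not_infinite, not_not] at hinf
    have h0 : h = 0 := by rw [← hu, Set.Infinite.ncard hinf]
    have hall : ∀ a b : V, a = b := by
      intro a b
      have hd := hβ a b
      have hab : β a = β b := by
        funext i; exact absurd i.2 (by omega)
      rw [hab, hammingDist_self] at hd
      exact hconn.dist_eq_zero_iff.mp hd.symm
    obtain ⟨z, hz⟩ := hinf.nonempty
    exact G.ne_of_adj hz (hall u z)
  haveI : Finite (G.neighborSet u) := hfinN.to_subtype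
  have hcard : Nat.card (G.neighborSet u) = h := by
    rw [Nat.card_coe_set_eq]; exact hu
  -- coordinates of the weight-one labels
  obtain ⟨hαu, hαinj, hα3, hα4⟩ := hα
  obtain ⟨hβu, hβinj, hβ3, hβ4⟩ := hβ'good
  choose jα hjα1 hjα2 using fun z : G.neighborSet u => my_weight_one (hα3 z z.2)
  choose jβ hjβ1 hjβ2 using fun z : G.neighborSet u => my_weight_one (hβ3 z z.2)
  have hαchar : ∀ (z : G.neighborSet u) (k : Fin h), α z k = true ↔ k = jα z := by
    intro z k
    constructor
    · intro hk; by_contra hne; rw [hjα2 z k hne] at hk; exact Bool.noConfusion hk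
    · intro hk; rw [hk]; exact hjα1 z
  have hβchar : ∀ (z : G.neighborSet u) (k : Fin h), β' z k = true ↔ k = jβ z := by
    intro z k
    constructor
    · intro hk; by_contra hne; rw [hjβ2 z k hne] at hk; exact Bool.noConfusion hk
    · intro hk; rw [hk]; exact hjβ1 z
  have hjαinj : Function.Injective jα := by
    intro a b hab
    have : α a = α b := by
      funext k
      apply my_bool_eq_of_iff
      rw [hαchar a k, hαchar b k, hab]
    exact Subtype.ext (hαinj a.2 b.2 this)
  have hjβinj : Function.Injective jβ := by
    intro a b hab
    have : β' a = β' b := by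
      funext k
      apply my_bool_eq_of_iff
      rw [hβchar a k, hβchar b k, hab]
    exact Subtype.ext (hβinj a.2 b.2 this)
  have hjαbij : Function.Bijective jα :=
    (Nat.bijective_iff_injective_and_card jα).mpr ⟨hjαinj, by simp [hcard]⟩
  have hjβbij : Function.Bijective jβ :=
    (Nat.bijective_iff_injective_and_card jβ).mpr ⟨hjβinj, by simp [hcard]⟩
  set eα := Equiv.ofBijective jα hjαbij with heα
  set eβ := Equiv.ofBijective jβ hjβbij with heβ
  set σ : Fin h ≃ Fin h := eα.symm.trans eβ with hσ
  set γ : V → Fin h → Bool := fun v i => β' v (σ i) with hγ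
  have hγiso : IsIsomEmb G γ := fun a b => by
    rw [hγ]
    exact (my_hd_comp σ (β' a) (β' b)).trans (hβ'iso a b)
  -- γ agrees with α on N[u]
  have hγz : ∀ z ∈ G.neighborSet u, γ z = α z := by
    intro z hz
    funext i
    apply my_bool_eq_of_iff
    have : γ z i = β' z (σ i) := rfl
    rw [this, hβchar ⟨z, hz⟩ (σ i), hαchar ⟨z, hz⟩ i]
    have hσi : σ i = eβ (eα.symm i) := rfl
    rw [hσi]
    constructor
    · intro hq
      have : eα.symm i = ⟨z, hz⟩ := eβ.injective (by rw [hq]; rfl)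
      have := congrArg eα this
      rw [Equiv.apply_symm_apply] at this
      exact this
    · intro hq
      have : eα.symm i = ⟨z, hz⟩ := by
        rw [hq]
        exact eα.symm_apply_apply _
      rw [this]; rfl
  have hγu : γ u = zeroW h := by
    funext i
    have : γ u i = β' u (σ i) := rfl
    rw [this, hβu]; rfl
  have hγgood : goodLabeling G u γ := by
    refine ⟨hγu, ?_, ?_, ?_⟩
    · intro a ha b hb hab
      apply hαinj ha hb
      rw [← hγz a ha, ← hγz b hb, hab]
    · intro z hz
      rw [hγz z hz]
      exact hα3 z hz
    · intro v hv i
      have h1 : γ v i = β' v (σ i) := rfl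
      rw [h1, hβ4 v hv (σ i)]
  have hαγ : α = γ := by
    apply my_unique G u γ α hγgood ⟨hαu, hαinj, hα3, hα4⟩
    intro z hz
    rcases hz with rfl | hz
    · rw [hγu, hαu]
    · exact (hγz z hz).symm
  constructor
  · rw [hαγ]; exact hγiso
  · intro α' hα' hagree
    exact my_unique G u α α' ⟨hαu, hαinj, hα3, hα4⟩ hα' hagree
end

section
/- Let h ≥ 1 and let X ⊆ B^h be nonempty with ∨_{x∈X} x = 1^h (every coordinate is 1 in some element of X). Let G = Q_h(X), let v be a minimal vertex of G, and let α be an isometric embedding of G into Q_h with α(v) = 0^h. Then α is a proper embedding of G. -/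
open SimpleGraph

section Aux
variable {h : ℕ}

lemma weightW_eq_hamming (u : Fin h → Bool) : hammingDist (zeroW h) u = weightW u := by
  unfold weightW
  rw [hammingDist]
  congr 1
  ext i
  cases hu : u i <;> simp [zeroW, hu]

lemma update_le (a : Fin h → Bool) (i : Fin h) : Function.update a i false ≤ a := by
  intro j
  rcases eq_or_ne j i with rfl | hj
  · simp [Bool.false_le]
  · simp [Function.update_apply, hj]

lemma le_update {a y : Fin h → Bool} (i : Fin h) (hy : y ≤ a) (hyi : y i = false) :
    y ≤ Function.update a i false := by
  intro j
  rcases eq_or_ne j i with rfl | hj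
  · simp [hyi]
  · simpa [Function.update_apply, hj] using hy j

lemma weightW_update {a : Fin h → Bool} {i : Fin h} (ha : a i = true) :
    weightW (Function.update a i false) + 1 = weightW a := by
  unfold weightW
  have he : (Finset.univ.filter fun j => Function.update a i false j = true)
      = (Finset.univ.filter fun j => a j = true).erase i := by
    ext j
    rcases eq_or_ne j i with rfl | hj
    · simp
    · simp [Function.update_apply, hj]
  rw [he, Finset.card_erase_of_mem (by simp [ha])]
  have hpos : 0 < (Finset.univ.filter fun j => a j = true).card :=
    Finset.card_pos.mpr ⟨i, by simp [ha]⟩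
  omega

lemma hamming_update {a : Fin h → Bool} {i : Fin h} (ha : a i = true) :
    hammingDist a (Function.update a i false) = 1 := by
  rw [hammingDist, Finset.card_eq_one]
  refine ⟨i, ?_⟩
  ext j
  rcases eq_or_ne j i with rfl | hj
  · simp [ha]
  · simp [Function.update_apply, hj]

lemma down_step {a b : Fin h → Bool} (hd : hammingDist a b = 1)
    (hw : weightW b + 1 = weightW a) :
    ∃ i, a i = true ∧ b = Function.update a i false := by
  rw [hammingDist, Finset.card_eq_one] at hd
  obtain ⟨i, hi⟩ := hd
  have hne : a i ≠ b i := by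
    have hmem := Finset.mem_singleton_self i
    rw [← hi] at hmem
    simpa using hmem
  have heq : ∀ j, j ≠ i → b j = a j := by
    intro j hj
    by_contra hne'
    have hmem : j ∈ ({i} : Finset (Fin h)) := by
      rw [← hi]
      simp only [Finset.mem_filter, Finset.mem_univ, true_and]
      exact fun hc => hne' hc.symm
    simp only [Finset.mem_singleton] at hmem
    exact hj hmem
  rcases Bool.eq_false_or_eq_true (a i) with hai | hai
  · -- a i = true : the good case
    refine ⟨i, hai, ?_⟩
    have hbi : b i = false := by
      cases hb : b i
      · rfl
      · exact absurd (hai.trans hb.symm) hne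
    ext j
    rcases eq_or_ne j i with rfl | hj
    · simp [hbi]
    · simp [Function.update_apply, hj, heq j hj]
  · exfalso
    have hbi : b i = true := by
      cases hb : b i
      · exact absurd (hai.trans hb.symm) hne
      · rfl
    have hab : a = Function.update b i false := by
      ext j
      rcases eq_or_ne j i with rfl | hj
      · simp [hai]
      · simp [Function.update_apply, hj, heq j hj]
    have hwu := weightW_update hbi
    rw [← hab] at hwu
    omega

lemma weightW_zero_iff (u : Fin h → Bool) : weightW u = 0 ↔ u = zeroW h := by
  unfold weightW
  rw [Finset.card_eq_zero, Finset.filter_eq_empty_iff]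
  constructor
  · intro hc
    ext j
    have := hc (Finset.mem_univ j)
    simpa [zeroW] using this
  · intro hu j _
    rw [hu]; simp [zeroW]

lemma daisy_preconnected {X : Set (Fin h → Bool)} (hX : X.Nonempty) :
    (daisyGraph X).Preconnected := by
  obtain ⟨x, hx⟩ := hX
  have hz : zeroW h ∈ daisyVerts X := ⟨x, hx, fun i => Bool.false_le _⟩
  set z0 : daisyVerts X := ⟨zeroW h, hz⟩ with hz0
  have key : ∀ n (u : daisyVerts X), weightW (u : Fin h → Bool) = n →
      (daisyGraph X).Reachable u z0 := by
    intro n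
    induction n using Nat.strong_induction_on with
    | _ n ih =>
      intro u hu
      rcases Nat.eq_zero_or_pos n with rfl | hn
      · have : (u : Fin h → Bool) = zeroW h := (weightW_zero_iff _).mp hu
        have : u = z0 := Subtype.ext this
        rw [this]
      · have hex : ∃ i, (u : Fin h → Bool) i = true := by
          by_contra hc
          push_neg at hc
          have h0 : weightW (u : Fin h → Bool) = 0 := by
            rw [weightW_zero_iff]
            ext j
            simpa [zeroW] using hc j
          omega
        obtain ⟨i, hi⟩ := hex
        have hmem : Function.update (u : Fin h → Bool) i false ∈ daisyVerts X := by
          obtain ⟨x', hx', hle⟩ := u.2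
          exact ⟨x', hx', le_trans (update_le _ _) hle⟩
        have hadj : (daisyGraph X).Adj u ⟨_, hmem⟩ := hamming_update hi
        have hw := weightW_update hi
        exact (hadj.reachable).trans (ih (n - 1) (by omega) ⟨_, hmem⟩ (by simp; omega))
  intro u w
  exact (key _ u rfl).trans (key _ w rfl).symm

end Aux

/-- Let `X ⊆ B^h` be nonempty with `∨_{x ∈ X} x = 1^h`. If `v` is a
minimal vertex of the daisy cube `G = Q_h(X)` and `α` is an isometric embedding of
`G` into `Q_h` with `α(v) = 0^h`, then `α` is a proper embedding of `G`. -/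
theorem stmt_7 (h : ℕ) (hh : 1 ≤ h) (X : Set (Fin h → Bool)) (hX : X.Nonempty)
    (hfull : ∀ i : Fin h, ∃ x ∈ X, x i = true)
    (v : daisyVerts X) (hv : IsMinVertex (daisyGraph X) h v)
    (α : daisyVerts X → Fin h → Bool) (hα : IsIsomEmb (daisyGraph X) α)
    (hα0 : α v = zeroW h) :
    IsProperEmb (daisyGraph X) α := by
  classical
  obtain ⟨β, ⟨hβiso, ⟨φ⟩⟩, hβ0⟩ := hv
  have hpre : (daisyGraph X).Preconnected := daisy_preconnected hX
  have hne : Nonempty (daisyVerts X) := ⟨v⟩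
  have hconn : (daisyGraph X).Connected := ⟨hpre⟩
  have hinj : ∀ (γ : daisyVerts X → Fin h → Bool), IsIsomEmb (daisyGraph X) γ →
      Function.Injective γ := by
    intro γ hγ a b hab
    have hd := hγ a b
    rw [hab, hammingDist_self] at hd
    exact (hconn.dist_eq_zero_iff).mp hd.symm
  have hβinj := hinj β hβiso
  have hαinj := hinj α hα
  -- range β is down-closed
  have hβr : daisyVerts (Set.range β) = Set.range β := by
    have hsub : Set.range β ⊆ daisyVerts (Set.range β) := fun y hy => ⟨y, hy, le_refl y⟩
    have hcard : (daisyVerts (Set.range β)).ncard ≤ (Set.range β).ncard := by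
      have h1 : Nat.card (daisyVerts (Set.range β)) = Nat.card (daisyVerts X) :=
        Nat.card_congr φ.toEquiv.symm
      have h2 : Nat.card (Set.range β) = Nat.card (daisyVerts X) :=
        Nat.card_range_of_injective hβinj
      rw [← Nat.card_coe_set_eq, ← Nat.card_coe_set_eq, h1, h2]
    exact (Set.eq_of_subset_of_ncard_le hsub hcard (Set.toFinite _)).symm
  -- distance/weight relations
  have hdβ : ∀ u, weightW (β u) = (daisyGraph X).dist v u := fun u => by
    rw [← weightW_eq_hamming, ← hβ0]; exact hβiso v u
  have hdα : ∀ u, weightW (α u) = (daisyGraph X).dist v u := fun u => by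
    rw [← weightW_eq_hamming, ← hα0]; exact hα v u
  -- key step
  have key : ∀ (u : daisyVerts X) (i : Fin h), α u i = true →
      ∃ z, α z = Function.update (α u) i false := by
    intro u i hi
    set a := α u with ha
    set b := β u with hb
    have hwab : weightW b = weightW a := by rw [hdβ, hdα]
    have step : ∀ j, b j = true → ∃ (i' : Fin h) (z : daisyVerts X),
        a i' = true ∧ α z = Function.update a i' false ∧
        β z = Function.update b j false := by
      intro j hj
      have hmem : Function.update b j false ∈ Set.range β := by
        rw [← hβr]; exact ⟨b, ⟨u, rfl⟩, update_le _ _⟩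
      obtain ⟨z, hz⟩ := hmem
      have hdz : hammingDist a (α z) = 1 := by
        rw [hα u z, ← hβiso u z, hz, hamming_update hj]
      have hwz : weightW (α z) + 1 = weightW a := by
        have h1 : weightW (β z) = weightW (α z) := by rw [hdβ, hdα]
        rw [← h1, hz, weightW_update hj, hwab]
      obtain ⟨i', hi', hzi⟩ := down_step hdz hwz
      exact ⟨i', z, hi', hzi, hz⟩
    choose f zf hfa hfα hfβ using step
    set T := (Finset.univ.filter fun j => b j = true) with hT
    set S := (Finset.univ.filter fun j => a j = true) with hS
    have hTmem : ∀ j : {j // j ∈ T}, b j.1 = true := fun j =>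
      (Finset.mem_filter.mp j.2).2
    let F : {j // j ∈ T} → {i' // i' ∈ S} := fun j =>
      ⟨f j.1 (hTmem j), by simp [hS, hfa j.1 (hTmem j)]⟩
    have hFinj : Function.Injective F := by
      intro j j' hFe
      have he : f j.1 (hTmem j) = f j'.1 (hTmem j') := congrArg Subtype.val hFe
      have hze : zf j.1 (hTmem j) = zf j'.1 (hTmem j') := by
        apply hαinj
        rw [hfα j.1 (hTmem j), hfα j'.1 (hTmem j'), he]
      have hβe : Function.update b j.1 false = Function.update b j'.1 false := by
        rw [← hfβ j.1 (hTmem j), ← hfβ j'.1 (hTmem j'), hze]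
      apply Subtype.ext
      by_contra hne
      have := congrFun hβe j.1
      rw [Function.update_self, Function.update_apply] at this
      rw [if_neg hne] at this
      rw [hTmem j] at this
      exact Bool.noConfusion this.symm
    have hcardTS : Fintype.card {j // j ∈ T} = Fintype.card {i' // i' ∈ S} := by
      rw [Fintype.card_coe, Fintype.card_coe]
      exact hwab
    have hFsurj : Function.Surjective F :=
      ((Fintype.bijective_iff_injective_and_card F).mpr ⟨hFinj, hcardTS⟩).2
    obtain ⟨j, hj⟩ := hFsurj ⟨i, by simp [hS, hi]⟩
    refine ⟨zf j.1 (hTmem j), ?_⟩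
    have : f j.1 (hTmem j) = i := congrArg Subtype.val hj
    rw [hfα j.1 (hTmem j), this]
  -- range α is down-closed
  have hclosed : ∀ n (y : Fin h → Bool) (u : daisyVerts X),
      weightW (α u) = n → y ≤ α u → y ∈ Set.range α := by
    intro n
    induction n using Nat.strong_induction_on with
    | _ n ih =>
      intro y u hn hy
      by_cases hyu : y = α u
      · exact ⟨u, hyu.symm⟩
      · have hex : ∃ i, α u i = true ∧ y i = false := by
          by_contra hc
          push_neg at hc
          apply hyu
          ext j
          cases hj : α u j
          · have := hy j
            rw [hj, Bool.le_iff_imp] at this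
            cases hyj : y j
            · rfl
            · exact (this hyj).symm
          · cases hyj : y j
            · exact absurd hyj (hc j hj)
            · rfl
        obtain ⟨i, hui, hyi⟩ := hex
        obtain ⟨z, hz⟩ := key u i hui
        have hwz : weightW (α z) + 1 = n := by
          rw [hz, ← hn]; exact weightW_update hui
        exact ih (weightW (α z)) (by omega) y z rfl (by rw [hz]; exact le_update i hy hyi)
  -- conclude
  refine ⟨hα, ⟨?_⟩⟩
  have hαr : daisyVerts (Set.range α) = Set.range α := by
    apply Set.Subset.antisymm
    · rintro y ⟨x, ⟨u, rfl⟩, hle⟩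
      exact hclosed _ y u rfl hle
    · exact fun y hy => ⟨y, hy, le_refl y⟩
  refine ⟨(Equiv.ofInjective α hαinj).trans (Equiv.setCongr hαr.symm), ?_⟩
  intro a b
  show hammingDist (α a) (α b) = 1 ↔ _
  rw [hα, dist_eq_one_iff_adj]
end
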